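/- Decision rule guarantee for the adaptive minimum decision rule (AMDR). Fix ν ∈ ℕ, suppose δ, δ^ν ∈ (ε,∞], τ^ν ∈ [0,∞), (F^ν,G^ν) is a τ^ν-minimizer of the training problem (TP)^ν without the risk constraints, and the following hold: (a) ℛ₀ is real-valued, monotone, and convex; (b) h^ν(F,G) = 0 whenever F and G are constant mappings; (c) there exist σ^ν, κ₀ ∈ [0,∞) with |ψ₀(ξ,x,y) − ψ₀(ξ',x,y)| ≤ κ₀‖ξ − ξ'‖₂ and |ψ₀^ν(ξ,x,y) − ψ₀(ξ,x,y)| ≤ σ^ν for all ξ,ξ' ∈ Ξ and (x,y) ∈ C; (d) ℱ and 𝒢 are closed under addition of constants and contain their zero mappings. For each ξ ∈ Ξ let ω̄(ξ) ∈ argmin_{ω∈Ω} ψ₀(ξ, F^ν(ξ^ν(ω)), ℍ(G^ν(ξ^ν(ω)))) and set F̄(ξ) = F^ν(ξ^ν(ω̄(ξ))) and Ḡ(ξ) = G^ν(ξ^ν(ω̄(ξ))). Then for every ξ ∈ Ξ: (F̄(ξ), ℍ(Ḡ(ξ))) ∈ C, the infimum inf_{(x,y)∈C} ψ₀(ξ,x,y)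 is finite, and ψ₀(ξ, F̄(ξ), ℍ(Ḡ(ξ))) ≤ inf_{(x,y)∈C} ψ₀(ξ,x,y) + 2σ^ν + τ^ν + 2κ₀·diam Ξ. -/

import Mathlib

/-!
Compare the training objective of `(F^ν, G^ν)` with that of a constant decision rule `(x, y) ∈ C`,
encoded through `G ≡ (±ε)`: it is feasible for (TP)^ν and carries no regularization, so by
`τ^ν`-optimality the risk of `(F^ν, G^ν)` is at most that of the constant rule plus `τ^ν`.
Passing between `ψ₀(ξ, ·)` and `ψ₀^ν(ξ^ν(ω), ·)` costs at most `σ^ν + κ₀ diam Ξ` in either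
direction. Since `ω̄(ξ)` picks the best training prescription for `ξ`, its value at `ξ` minus
this cost lies below every training value, hence below their risk, while the risk of the
constant rule lies below `ψ₀(ξ, x, y)` plus the same cost.
-/

open Filter Finset

/-- The multivariate Heaviside function. -/
noncomputable def Heav {s : ℕ} (v : EuclideanSpace ℝ (Fin s)) : EuclideanSpace ℝ (Fin s) :=
  WithLp.toLp 2 (fun i => if v i ≤ 0 then 0 else 1)

/-- The set `D_ε(δ) = ([−δ,−ε] ∪ [ε,δ])^m`, with `δ` possibly infinite. -/
def Dset (m : ℕ) (ε : ℝ) (δ : EReal) : Set (EuclideanSpace ℝ (Fin m)) :=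
  {g | ∀ i, ε ≤ |g i| ∧ ((|g i| : ℝ) : EReal) ≤ δ}

theorem const_mem_of_forall_add_const_mem {X E : Type*} [AddZeroClass E] {S : Set (X → E)}
    (hzero : (fun _ => 0) ∈ S) (hshift : ∀ F ∈ S, ∀ a : E, (fun ζ => F ζ + a) ∈ S) (a : E) :
    (fun _ => a) ∈ S := by
  simpa using hshift _ hzero a

theorem exists_mem_Dset_Heav_eq {m : ℕ} {ε : ℝ} {δ : EReal} (hε : 0 < ε) (hδ : (ε : EReal) ≤ δ)
    {y : EuclideanSpace ℝ (Fin m)} (hy : ∀ i, y i = 0 ∨ y i = 1) :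
    ∃ g ∈ Dset m ε δ, Heav g = y := by
  refine ⟨WithLp.toLp 2 (fun i => if y i = 0 then -ε else ε), fun i => ?_, ?_⟩
  · have habs : |(if y i = 0 then -ε else ε)| = ε := by
      split_ifs <;> simp [abs_of_pos hε]
    simpa [habs] using hδ
  · ext i
    rcases hy i with h | h <;> simp [Heav, h, hε.le, hε.not_ge]

section RiskMeasure

variable {Ω : Type*} {R : (Ω → ℝ) → ℝ} (hconst : ∀ c : ℝ, R (fun _ => c) = c)
  (hmono : ∀ η η' : Ω → ℝ, (∀ ω, η ω ≤ η' ω) → R η ≤ R η')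
include hconst hmono

theorem le_risk_of_forall_le {c : ℝ} {η : Ω → ℝ} (h : ∀ ω, c ≤ η ω) : c ≤ R η :=
  hconst c ▸ hmono _ _ h

theorem risk_le_of_forall_le {c : ℝ} {η : Ω → ℝ} (h : ∀ ω, η ω ≤ c) : R η ≤ c :=
  hconst c ▸ hmono _ _ h

end RiskMeasure

theorem abs_sub_le_add_mul_diam {X : Type*} [PseudoMetricSpace X] {Ξ : Set X}
    (hΞ : Bornology.IsBounded Ξ) {f g : X → ℝ} {σ κ : ℝ} (hκ : 0 ≤ κ)
    (happrox : ∀ ξ ∈ Ξ, |g ξ - f ξ| ≤ σ) (hLip : ∀ ξ ∈ Ξ, ∀ ξ' ∈ Ξ, |f ξ - f ξ'| ≤ κ * dist ξ ξ')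
    {ξ ξ' : X} (hξ : ξ ∈ Ξ) (hξ' : ξ' ∈ Ξ) :
    |g ξ' - f ξ| ≤ σ + κ * Metric.diam Ξ :=
  calc |g ξ' - f ξ| ≤ |g ξ' - f ξ'| + |f ξ - f ξ'| := by
        rw [abs_sub_comm (f ξ)]; exact abs_sub_le _ _ _
    _ ≤ σ + κ * Metric.diam Ξ := add_le_add (happrox ξ' hξ') <|
        (hLip ξ hξ ξ' hξ').trans <|
          mul_le_mul_of_nonneg_left (Metric.dist_le_diam_of_mem hΞ hξ hξ') hκ

theorem bddBelow_and_le_csInf_add {S : Set ℝ} (hS : S.Nonempty) {a c : ℝ}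
    (h : ∀ v ∈ S, a ≤ v + c) : BddBelow S ∧ a ≤ sInf S + c := by
  have hlow : a - c ∈ lowerBounds S := fun v hv => by linarith [h v hv]
  exact ⟨⟨a - c, hlow⟩, by linarith [le_csInf hS hlow]⟩

theorem AMDR_guarantee_general
    {r n m : ℕ} {Ω : Type}
    (ψ0 ψ0ν : EuclideanSpace ℝ (Fin r) → EuclideanSpace ℝ (Fin n) →
      EuclideanSpace ℝ (Fin m) → ℝ)
    (C : Set (EuclideanSpace ℝ (Fin n) × EuclideanSpace ℝ (Fin m)))
    (hCne : C.Nonempty)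
    (hCbin : ∀ p ∈ C, ∀ i, p.2 i = 0 ∨ p.2 i = 1)
    (Ξ : Set (EuclideanSpace ℝ (Fin r))) (hΞcomp : IsCompact Ξ)
    (ξν : Ω → EuclideanSpace ℝ (Fin r)) (hξν : ∀ ω, ξν ω ∈ Ξ)
    (ℱ : Set (EuclideanSpace ℝ (Fin r) → EuclideanSpace ℝ (Fin n)))
    (𝒢 : Set (EuclideanSpace ℝ (Fin r) → EuclideanSpace ℝ (Fin m)))
    -- (a) ℛ₀ real-valued, monotone, convex
    (R0 : (Ω → ℝ) → ℝ)
    (hR0const : ∀ c : ℝ, R0 (fun _ => c) = c)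
    (hR0mono : ∀ η η' : Ω → ℝ, (∀ ω, η ω ≤ η' ω) → R0 η ≤ R0 η')
    -- (b) regularizer vanishes on constant mappings
    (hν : (EuclideanSpace ℝ (Fin r) → EuclideanSpace ℝ (Fin n)) →
      (EuclideanSpace ℝ (Fin r) → EuclideanSpace ℝ (Fin m)) → ℝ)
    (hhν_nonneg : ∀ F G, 0 ≤ hν F G)
    (hhν_const : ∀ F G, (∀ ζ ∈ Ξ, ∀ ζ' ∈ Ξ, F ζ = F ζ') →
      (∀ ζ ∈ Ξ, ∀ ζ' ∈ Ξ, G ζ = G ζ') → hν F G = 0)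
    (ε : ℝ) (hε : 0 < ε)
    (δν : EReal) (hδν : (ε : EReal) < δν)
    -- (c) Lipschitz and approximation bounds
    (σν κ0 : ℝ) (hκ0 : 0 ≤ κ0)
    (hLip : ∀ x y, (x, y) ∈ C → ∀ ξ ∈ Ξ, ∀ ξ' ∈ Ξ,
      |ψ0 ξ x y - ψ0 ξ' x y| ≤ κ0 * dist ξ ξ')
    (happrox : ∀ x y, (x, y) ∈ C → ∀ ξ ∈ Ξ, |ψ0ν ξ x y - ψ0 ξ x y| ≤ σν)
    -- (d) translation closure and zero mappings
    (hshiftF : ∀ F ∈ ℱ, ∀ a : EuclideanSpace ℝ (Fin n), (fun ζ => F ζ + a) ∈ ℱ)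
    (hshiftG : ∀ G ∈ 𝒢, ∀ b : EuclideanSpace ℝ (Fin m), (fun ζ => G ζ + b) ∈ 𝒢)
    (hzeroF : (fun _ => (0 : EuclideanSpace ℝ (Fin n))) ∈ ℱ)
    (hzeroG : (fun _ => (0 : EuclideanSpace ℝ (Fin m))) ∈ 𝒢)
    -- (F^ν,G^ν) is a τ^ν-minimizer of (TP)^ν without risk constraints
    (τν : ℝ)
    (Fν : EuclideanSpace ℝ (Fin r) → EuclideanSpace ℝ (Fin n))
    (Gν : EuclideanSpace ℝ (Fin r) → EuclideanSpace ℝ (Fin m))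
    (hνC : ∀ ω, (Fν (ξν ω), Heav (Gν (ξν ω))) ∈ C)
    (hnearmin : ∀ F ∈ ℱ, ∀ G ∈ 𝒢,
      (∀ ω, (F (ξν ω), Heav (G (ξν ω))) ∈ C) →
      (∀ ω, G (ξν ω) ∈ Dset m ε δν) →
      R0 (fun ω => ψ0ν (ξν ω) (Fν (ξν ω)) (Heav (Gν (ξν ω)))) + hν Fν Gν ≤
        R0 (fun ω => ψ0ν (ξν ω) (F (ξν ω)) (Heav (G (ξν ω)))) + hν F G + τν)
    -- ω̄(ξ) attains, for each ξ, the minimum of ψ₀(ξ,·,·) over the training prescriptions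
    (ωbar : EuclideanSpace ℝ (Fin r) → Ω)
    (hωbar : ∀ ξ ∈ Ξ, ∀ ω,
      ψ0 ξ (Fν (ξν (ωbar ξ))) (Heav (Gν (ξν (ωbar ξ)))) ≤
        ψ0 ξ (Fν (ξν ω)) (Heav (Gν (ξν ω)))) :
    ∀ ξ ∈ Ξ,
      (Fν (ξν (ωbar ξ)), Heav (Gν (ξν (ωbar ξ)))) ∈ C ∧
      BddBelow {v : ℝ | ∃ x y, (x, y) ∈ C ∧ v = ψ0 ξ x y} ∧
      ψ0 ξ (Fν (ξν (ωbar ξ))) (Heav (Gν (ξν (ωbar ξ)))) ≤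
        sInf {v : ℝ | ∃ x y, (x, y) ∈ C ∧ v = ψ0 ξ x y} +
          (2 * σν + τν + 2 * κ0 * Metric.diam Ξ) := by
  intro ξ hξ
  set A := ψ0 ξ (Fν (ξν (ωbar ξ))) (Heav (Gν (ξν (ωbar ξ))))
  set D := σν + κ0 * Metric.diam Ξ
  have hpert : ∀ x y, (x, y) ∈ C → ∀ ξ' ∈ Ξ, |ψ0ν ξ' x y - ψ0 ξ x y| ≤ D := fun x y hxy ξ' hξ' =>
    abs_sub_le_add_mul_diam hΞcomp.isBounded hκ0 (happrox x y hxy) (hLip x y hxy) hξ hξ'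
  have htrain : A - D ≤ R0 fun ω => ψ0ν (ξν ω) (Fν (ξν ω)) (Heav (Gν (ξν ω))) :=
    le_risk_of_forall_le hR0const hR0mono fun ω => by
      linarith [hωbar ξ hξ ω, (abs_le.mp (hpert _ _ (hνC ω) _ (hξν ω))).1]
  have hle_const_rule : ∀ x y, (x, y) ∈ C →
      A ≤ ψ0 ξ x y + (2 * σν + τν + 2 * κ0 * Metric.diam Ξ) := by
    intro x y hxy
    obtain ⟨g, hgD, hHg⟩ := exists_mem_Dset_Heav_eq hε hδν.le (hCbin (x, y) hxy)
    have hopt := hnearmin _ (const_mem_of_forall_add_const_mem hzeroF hshiftF x)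
      _ (const_mem_of_forall_add_const_mem hzeroG hshiftG g) (fun _ => hHg ▸ hxy) (fun _ => hgD)
    rw [hhν_const (fun _ => x) (fun _ => g) (fun _ _ _ _ => rfl) (fun _ _ _ _ => rfl), hHg] at hopt
    have hconstRisk : (R0 fun ω => ψ0ν (ξν ω) x y) ≤ ψ0 ξ x y + D :=
      risk_le_of_forall_le hR0const hR0mono fun ω => by
        linarith [(abs_le.mp (hpert _ _ hxy _ (hξν ω))).2]
    linarith [hhν_nonneg Fν Gν]
  refine ⟨hνC (ωbar ξ), bddBelow_and_le_csInf_add ?_ ?_⟩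
  · obtain ⟨⟨x₀, y₀⟩, h₀⟩ := hCne
    exact ⟨ψ0 ξ x₀ y₀, x₀, y₀, h₀, rfl⟩
  · rintro v ⟨x, y, hxy, rfl⟩
    exact hle_const_rule x y hxy

/-- Decision rule guarantee for the adaptive minimum decision rule (AMDR): the
`ξ`-adaptive decision prescribed at the best training point for `ξ` is
`(2σ^ν + τ^ν + 2κ₀·diam Ξ)`-suboptimal for the actual problem uniformly over `ξ ∈ Ξ`. -/
theorem AMDR_guarantee
    {r n m : ℕ} {Ω : Type} [Fintype Ω] [Nonempty Ω]
    (P : Ω → ℝ) (hP : ∀ ω, 0 < P ω) (hPsum : ∑ ω, P ω = 1)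
    (ψ0 ψ0ν : EuclideanSpace ℝ (Fin r) → EuclideanSpace ℝ (Fin n) →
      EuclideanSpace ℝ (Fin m) → ℝ)
    (hψ0cont : Continuous fun p : EuclideanSpace ℝ (Fin r) × EuclideanSpace ℝ (Fin n) ×
      EuclideanSpace ℝ (Fin m) => ψ0 p.1 p.2.1 p.2.2)
    (hψ0νcont : Continuous fun p : EuclideanSpace ℝ (Fin r) × EuclideanSpace ℝ (Fin n) ×
      EuclideanSpace ℝ (Fin m) => ψ0ν p.1 p.2.1 p.2.2)
    (C : Set (EuclideanSpace ℝ (Fin n) × EuclideanSpace ℝ (Fin m)))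
    (hCne : C.Nonempty) (hCcl : IsClosed C)
    (hCbin : ∀ p ∈ C, ∀ i, p.2 i = 0 ∨ p.2 i = 1)
    (Ξ : Set (EuclideanSpace ℝ (Fin r))) (hΞcomp : IsCompact Ξ)
    (ξν : Ω → EuclideanSpace ℝ (Fin r)) (hξν : ∀ ω, ξν ω ∈ Ξ)
    (ℱ : Set (EuclideanSpace ℝ (Fin r) → EuclideanSpace ℝ (Fin n)))
    (𝒢 : Set (EuclideanSpace ℝ (Fin r) → EuclideanSpace ℝ (Fin m)))
    (hℱcont : ∀ F ∈ ℱ, ContinuousOn F Ξ) (h𝒢cont : ∀ G ∈ 𝒢, ContinuousOn G Ξ)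
    -- (a) ℛ₀ real-valued, monotone, convex
    (R0 : (Ω → ℝ) → ℝ)
    (hR0const : ∀ c : ℝ, R0 (fun _ => c) = c)
    (hR0mono : ∀ η η' : Ω → ℝ, (∀ ω, η ω ≤ η' ω) → R0 η ≤ R0 η')
    (hR0convex : ∀ l : ℝ, 0 ≤ l → l ≤ 1 → ∀ η η' : Ω → ℝ,
      R0 (fun ω => (1 - l) * η ω + l * η' ω) ≤ (1 - l) * R0 η + l * R0 η')
    -- (b) regularizer vanishes on constant mappings
    (hν : (EuclideanSpace ℝ (Fin r) → EuclideanSpace ℝ (Fin n)) →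
      (EuclideanSpace ℝ (Fin r) → EuclideanSpace ℝ (Fin m)) → ℝ)
    (hhν_nonneg : ∀ F G, 0 ≤ hν F G)
    (hhν_const : ∀ F G, (∀ ζ ∈ Ξ, ∀ ζ' ∈ Ξ, F ζ = F ζ') →
      (∀ ζ ∈ Ξ, ∀ ζ' ∈ Ξ, G ζ = G ζ') → hν F G = 0)
    (ε : ℝ) (hε : 0 < ε)
    (δ δν : EReal) (hδ : (ε : EReal) < δ) (hδν : (ε : EReal) < δν)
    -- (c) Lipschitz and approximation bounds
    (σν κ0 : ℝ) (hσν : 0 ≤ σν) (hκ0 : 0 ≤ κ0)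
    (hLip : ∀ x y, (x, y) ∈ C → ∀ ξ ∈ Ξ, ∀ ξ' ∈ Ξ,
      |ψ0 ξ x y - ψ0 ξ' x y| ≤ κ0 * dist ξ ξ')
    (happrox : ∀ x y, (x, y) ∈ C → ∀ ξ ∈ Ξ, |ψ0ν ξ x y - ψ0 ξ x y| ≤ σν)
    -- (d) translation closure and zero mappings
    (hshiftF : ∀ F ∈ ℱ, ∀ a : EuclideanSpace ℝ (Fin n), (fun ζ => F ζ + a) ∈ ℱ)
    (hshiftG : ∀ G ∈ 𝒢, ∀ b : EuclideanSpace ℝ (Fin m), (fun ζ => G ζ + b) ∈ 𝒢)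
    (hzeroF : (fun _ => (0 : EuclideanSpace ℝ (Fin n))) ∈ ℱ)
    (hzeroG : (fun _ => (0 : EuclideanSpace ℝ (Fin m))) ∈ 𝒢)
    -- (F^ν,G^ν) is a τ^ν-minimizer of (TP)^ν without risk constraints
    (τν : ℝ) (hτν : 0 ≤ τν)
    (Fν : EuclideanSpace ℝ (Fin r) → EuclideanSpace ℝ (Fin n))
    (Gν : EuclideanSpace ℝ (Fin r) → EuclideanSpace ℝ (Fin m))
    (hFνmem : Fν ∈ ℱ) (hGνmem : Gν ∈ 𝒢)
    (hνC : ∀ ω, (Fν (ξν ω), Heav (Gν (ξν ω))) ∈ C)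
    (hνD : ∀ ω, Gν (ξν ω) ∈ Dset m ε δν)
    (hnearmin : ∀ F ∈ ℱ, ∀ G ∈ 𝒢,
      (∀ ω, (F (ξν ω), Heav (G (ξν ω))) ∈ C) →
      (∀ ω, G (ξν ω) ∈ Dset m ε δν) →
      R0 (fun ω => ψ0ν (ξν ω) (Fν (ξν ω)) (Heav (Gν (ξν ω)))) + hν Fν Gν ≤
        R0 (fun ω => ψ0ν (ξν ω) (F (ξν ω)) (Heav (G (ξν ω)))) + hν F G + τν)
    -- ω̄(ξ) attains, for each ξ, the minimum of ψ₀(ξ,·,·) over the training prescriptions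
    (ωbar : EuclideanSpace ℝ (Fin r) → Ω)
    (hωbar : ∀ ξ ∈ Ξ, ∀ ω,
      ψ0 ξ (Fν (ξν (ωbar ξ))) (Heav (Gν (ξν (ωbar ξ)))) ≤
        ψ0 ξ (Fν (ξν ω)) (Heav (Gν (ξν ω)))) :
    ∀ ξ ∈ Ξ,
      (Fν (ξν (ωbar ξ)), Heav (Gν (ξν (ωbar ξ)))) ∈ C ∧
      BddBelow {v : ℝ | ∃ x y, (x, y) ∈ C ∧ v = ψ0 ξ x y} ∧
      ψ0 ξ (Fν (ξν (ωbar ξ))) (Heav (Gν (ξν (ωbar ξ)))) ≤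
        sInf {v : ℝ | ∃ x y, (x, y) ∈ C ∧ v = ψ0 ξ x y} +
          (2 * σν + τν + 2 * κ0 * Metric.diam Ξ) :=
  AMDR_guarantee_general ψ0 ψ0ν C hCne hCbin Ξ hΞcomp ξν hξν ℱ 𝒢 R0 hR0const hR0mono hν hhν_nonneg
    hhν_const ε hε δν hδν σν κ0 hκ0 hLip happrox hshiftF hshiftG hzeroF hzeroG τν Fν Gν hνC hnearmin
    ωbar hωbar
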